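/- Let 𝒢₁ and 𝒢₂ be finite graphs at least one of which is not complete, and let 𝒢₁ ⋆ 𝒢₂ be their join. Then γ(𝒢₁ ⋆ 𝒢₂) = max(γ(𝒢₁), γ(𝒢₂)). -/

import Mathlib

/-- A clique collection in `G`. -/
def IsCliqueCollection {V : Type*} (G : SimpleGraph V) (𝒞 : Finset (Finset V)) : Prop :=
  (∀ C ∈ 𝒞, C.Nonempty ∧ G.IsClique (C : Set V)) ∧
  (𝒞 : Set (Finset V)).Pairwise fun C D => ∀ v ∈ C, ∀ w ∈ D, v ≠ w ∧ ¬ G.Adj v w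

/-- The weight `w(𝒞) = Σ_i (1 - 2^{-|𝒞_i|})` of a clique collection. -/
noncomputable def cliqueCollectionWeight {V : Type*} (𝒞 : Finset (Finset V)) : ℝ :=
  ∑ C ∈ 𝒞, (1 - (1 / 2 : ℝ) ^ C.card)

/-- The set of weights of clique collections of `G`; `γ(G)` is its greatest element. -/
def gammaSet {V : Type*} (G : SimpleGraph V) : Set ℝ :=
  {x : ℝ | ∃ 𝒞 : Finset (Finset V), IsCliqueCollection G 𝒞 ∧ x = cliqueCollectionWeight 𝒞}

/-- The join of two graphs: adjacency within each side is unchanged, and every vertex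
of one side is adjacent to every vertex of the other. -/
def SimpleGraph.graphJoin {V₁ V₂ : Type*} (G₁ : SimpleGraph V₁) (G₂ : SimpleGraph V₂) :
    SimpleGraph (V₁ ⊕ V₂) where
  Adj x y :=
    match x, y with
    | .inl a, .inl b => G₁.Adj a b
    | .inr a, .inr b => G₂.Adj a b
    | .inl _, .inr _ => True
    | .inr _, .inl _ => True
  symm := by constructor; rintro (a | a) (b | b) h
             · exact G₁.symm.symm _ _ h
             · trivial
             · trivial
             · exact G₂.symm.symm _ _ h
  loopless := by constructor; rintro (a | a) h
                 · exact G₁.loopless.irrefl a h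
                 · exact G₂.loopless.irrefl a h

/-! Each side is an induced subgraph of `G₁ ⋆ G₂`, so clique collections of `Gᵢ` and clique
collections of the join lying within that side correspond, with equal weights. A clique collection
meeting both sides is a single clique, because every vertex of one side is adjacent to every vertex
of the other, and so has weight `< 1`; but two non-adjacent vertices of a non-complete side already
form a clique collection of weight `1/2 + 1/2 = 1`. -/

namespace SimpleGraph

variable {V W : Type*} {G : SimpleGraph V} {H : SimpleGraph W}

theorem Embedding.isClique_image_iff (f : G ↪g H) {s : Set V} :
    H.IsClique (f '' s) ↔ G.IsClique s := by
  simp only [isClique_iff, f.injective.injOn.pairwise_image, Set.Pairwise, Function.onFun,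
    f.map_adj_iff]

def graphJoinInl {V₁ V₂ : Type*} (G₁ : SimpleGraph V₁) (G₂ : SimpleGraph V₂) :
    G₁ ↪g G₁.graphJoin G₂ :=
  ⟨Function.Embedding.inl, Iff.rfl⟩

def graphJoinInr {V₁ V₂ : Type*} (G₁ : SimpleGraph V₁) (G₂ : SimpleGraph V₂) :
    G₂ ↪g G₁.graphJoin G₂ :=
  ⟨Function.Embedding.inr, Iff.rfl⟩

end SimpleGraph

open SimpleGraph

theorem Finset.exists_map_eq_of_coe_subset_range {α β : Type*} {f : α ↪ β} {s : Finset β}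
    (hs : ↑s ⊆ Set.range f) : ∃ t : Finset α, t.map f = s := by
  classical
  refine ⟨s.preimage f f.injective.injOn, ?_⟩
  rw [map_eq_image, image_preimage, filter_true_of_mem fun x hx => hs hx]

section CliqueCollection

variable {V W : Type*} {G : SimpleGraph V} {H : SimpleGraph W}

theorem IsCliqueCollection.eq_of_adj {𝒞 : Finset (Finset V)} (h : IsCliqueCollection G 𝒞)
    {C D : Finset V} (hC : C ∈ 𝒞) (hD : D ∈ 𝒞) {v w : V} (hv : v ∈ C) (hw : w ∈ D)
    (hadj : G.Adj v w) : C = D := by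
  by_contra hne
  exact (h.2 hC hD hne v hv w hw).2 hadj

theorem isCliqueCollection_map_iff (f : G ↪g H) {𝒞 : Finset (Finset V)} :
    IsCliqueCollection H (𝒞.map (Finset.mapEmbedding f.toEmbedding).toEmbedding) ↔
      IsCliqueCollection G 𝒞 := by
  have hinj : Set.InjOn (Finset.mapEmbedding f.toEmbedding).toEmbedding 𝒞 :=
    (Finset.mapEmbedding f.toEmbedding).toEmbedding.injective.injOn
  refine and_congr ?_ ?_
  · simp only [Finset.forall_mem_map, RelEmbedding.coe_toEmbedding, Finset.mapEmbedding_apply,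
      Finset.map_nonempty, Finset.coe_map, f.isClique_image_iff]
  · rw [Finset.coe_map, hinj.pairwise_image]
    simp only [Set.Pairwise, Function.onFun, RelEmbedding.coe_toEmbedding,
      Finset.mapEmbedding_apply, Finset.forall_mem_map, f.injective.ne_iff, f.map_adj_iff]

theorem cliqueCollectionWeight_map (f : V ↪ W) (𝒞 : Finset (Finset V)) :
    cliqueCollectionWeight (𝒞.map (Finset.mapEmbedding f).toEmbedding) =
      cliqueCollectionWeight 𝒞 := by
  simp [cliqueCollectionWeight]

theorem cliqueCollectionWeight_singleton_lt_one (C : Finset V) :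
    cliqueCollectionWeight {C} < 1 := by
  rw [cliqueCollectionWeight, Finset.sum_singleton]
  linarith [pow_pos (by norm_num : (0 : ℝ) < 1 / 2) C.card]

theorem one_mem_gammaSet {v w : V} (hvw : v ≠ w) (hadj : ¬ G.Adj v w) : 1 ∈ gammaSet G := by
  classical
  have hvw' : ({v} : Finset V) ≠ {w} := by simpa using hvw
  refine ⟨{{v}, {w}}, ?_, ?_⟩
  · simp [IsCliqueCollection, Set.pairwise_insert, hvw, hvw.symm, hadj, G.adj_comm w v]
  · rw [cliqueCollectionWeight, Finset.sum_pair hvw']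
    norm_num

theorem gammaSet_subset_of_embedding (f : G ↪g H) : gammaSet G ⊆ gammaSet H := by
  rintro _ ⟨𝒞, h𝒞, rfl⟩
  exact ⟨_, (isCliqueCollection_map_iff f).2 h𝒞, (cliqueCollectionWeight_map _ 𝒞).symm⟩

theorem cliqueCollectionWeight_mem_gammaSet_of_subset_range (f : G ↪g H)
    {𝒞 : Finset (Finset W)} (h𝒞 : IsCliqueCollection H 𝒞)
    (hrange : ∀ C ∈ 𝒞, (C : Set W) ⊆ Set.range f) :
    cliqueCollectionWeight 𝒞 ∈ gammaSet G := by
  obtain ⟨𝒞', rfl⟩ :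
      ∃ 𝒞' : Finset (Finset V), 𝒞'.map (Finset.mapEmbedding f.toEmbedding).toEmbedding = 𝒞 :=
    Finset.exists_map_eq_of_coe_subset_range fun C hC =>
      Finset.exists_map_eq_of_coe_subset_range (hrange C hC)
  exact ⟨𝒞', (isCliqueCollection_map_iff f).1 h𝒞, cliqueCollectionWeight_map _ 𝒞'⟩

theorem IsCliqueCollection.graphJoin_cases {V₁ V₂ : Type*} {G₁ : SimpleGraph V₁}
    {G₂ : SimpleGraph V₂} {𝒞 : Finset (Finset (V₁ ⊕ V₂))}
    (h𝒞 : IsCliqueCollection (G₁.graphJoin G₂) 𝒞) :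
    (∀ C ∈ 𝒞, (C : Set (V₁ ⊕ V₂)) ⊆ Set.range Sum.inl) ∨
      (∀ C ∈ 𝒞, (C : Set (V₁ ⊕ V₂)) ⊆ Set.range Sum.inr) ∨
      ∃ C, 𝒞 = {C} := by
  by_cases hl : ∀ C ∈ 𝒞, (C : Set (V₁ ⊕ V₂)) ⊆ Set.range Sum.inl
  · exact .inl hl
  by_cases hr : ∀ C ∈ 𝒞, (C : Set (V₁ ⊕ V₂)) ⊆ Set.range Sum.inr
  · exact .inr (.inl hr)
  push Not at hl hr
  obtain ⟨C, hC, hCl⟩ := hl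
  obtain ⟨D, hD, hDr⟩ := hr
  obtain ⟨b, hb⟩ : ∃ b, Sum.inr b ∈ C := by
    obtain ⟨_ | b, hx, hxl⟩ := Set.not_subset.1 hCl
    · exact absurd ⟨_, rfl⟩ hxl
    · exact ⟨b, hx⟩
  obtain ⟨a, ha⟩ : ∃ a, Sum.inl a ∈ D := by
    obtain ⟨a | _, hx, hxr⟩ := Set.not_subset.1 hDr
    · exact ⟨a, hx⟩
    · exact absurd ⟨_, rfl⟩ hxr
  obtain rfl : D = C := h𝒞.eq_of_adj hD hC ha hb trivial
  refine .inr (.inr ⟨D, Finset.eq_singleton_iff_unique_mem.2 ⟨hD, fun E hE => ?_⟩⟩)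
  obtain ⟨_ | c, hc⟩ := (h𝒞.1 E hE).1
  · exact h𝒞.eq_of_adj hE hD hc hb trivial
  · exact h𝒞.eq_of_adj hE hD hc ha trivial

end CliqueCollection

theorem gamma_graphJoin_general {V₁ V₂ : Type*}
    (G₁ : SimpleGraph V₁) (G₂ : SimpleGraph V₂)
    (hnc : (∃ v w : V₁, v ≠ w ∧ ¬ G₁.Adj v w) ∨ (∃ v w : V₂, v ≠ w ∧ ¬ G₂.Adj v w))
    (γ₁ γ₂ : ℝ) (h₁ : IsGreatest (gammaSet G₁) γ₁) (h₂ : IsGreatest (gammaSet G₂) γ₂) :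
    IsGreatest (gammaSet (G₁.graphJoin G₂)) (max γ₁ γ₂) := by
  have hone : 1 ≤ max γ₁ γ₂ := by
    rcases hnc with ⟨v, w, hvw, hadj⟩ | ⟨v, w, hvw, hadj⟩
    · exact le_max_of_le_left (h₁.2 (one_mem_gammaSet hvw hadj))
    · exact le_max_of_le_right (h₂.2 (one_mem_gammaSet hvw hadj))
  refine ⟨?_, ?_⟩
  · rcases max_choice γ₁ γ₂ with h | h <;> rw [h]
    · exact gammaSet_subset_of_embedding (graphJoinInl G₁ G₂) h₁.1
    · exact gammaSet_subset_of_embedding (graphJoinInr G₁ G₂) h₂.1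
  · rintro _ ⟨𝒞, h𝒞, rfl⟩
    rcases IsCliqueCollection.graphJoin_cases h𝒞 with hl | hr | ⟨C, rfl⟩
    · exact le_max_of_le_left
        (h₁.2 (cliqueCollectionWeight_mem_gammaSet_of_subset_range (graphJoinInl G₁ G₂) h𝒞 hl))
    · exact le_max_of_le_right
        (h₂.2 (cliqueCollectionWeight_mem_gammaSet_of_subset_range (graphJoinInr G₁ G₂) h𝒞 hr))
    · exact (cliqueCollectionWeight_singleton_lt_one C).le.trans hone

/-- If at least one of two finite graphs is not complete, then
`γ(G₁ ⋆ G₂) = max(γ(G₁), γ(G₂))`. -/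
theorem gamma_graphJoin {V₁ V₂ : Type*} [Fintype V₁] [Fintype V₂]
    (G₁ : SimpleGraph V₁) (G₂ : SimpleGraph V₂)
    (hnc : (∃ v w : V₁, v ≠ w ∧ ¬ G₁.Adj v w) ∨ (∃ v w : V₂, v ≠ w ∧ ¬ G₂.Adj v w))
    (γ₁ γ₂ : ℝ) (h₁ : IsGreatest (gammaSet G₁) γ₁) (h₂ : IsGreatest (gammaSet G₂) γ₂) :
    IsGreatest (gammaSet (G₁.graphJoin G₂)) (max γ₁ γ₂) :=
  gamma_graphJoin_general G₁ G₂ hnc γ₁ γ₂ h₁ h₂
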